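/- arXiv:1806.06218 — 4 statements merged into one kernel-verified Lean document; each statement's English description precedes it below -/
import Mathlib

section
/- For all real z ≥ 0, log Γ(1+z) = ∫₀¹ (1 - t·z - (1-t)^z) / (t · log(1-t)) dt. -/
/-!
Put `x = 1 - t`. Writing `(x ^ b - x ^ a) / log x = ∫ s in a..b, x ^ s` and swapping the integrals
gives the Frullani-type integral `∫₀¹ (x ^ b - x ^ a) / log x dx = log (b + 1) - log (a + 1)`.
Expanding `1 / (1 - x)` as a geometric series, the `n`-th term `xⁿ (1 - (1 - x) z - x ^ z) / log x`
is a combination of two such integrands, and the partial sums of the resulting series of logarithms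
differ from Gauss's `logGammaSeq (1 + z) N` by terms tending to `0`. Termwise integration is
dominated convergence: Bernoulli's `x ^ s ≥ 1 - (1 + s) (1 - x)` bounds
`|1 - (1 - x) z - x ^ z|` by `z (z + 2) (1 - x) |log x|`.
-/

open Real MeasureTheory Set Filter Topology intervalIntegral Interval
open scoped Nat

namespace Real

lemma rpow_sub_rpow_div_log_eq_integral {x : ℝ} (hx₀ : 0 < x) (hx₁ : x ≠ 1) (a b : ℝ) :
    (x ^ b - x ^ a) / log x = ∫ s in a..b, x ^ s := by
  have hlog : log x ≠ 0 := log_ne_zero_of_pos_of_ne_one hx₀ hx₁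
  have hderiv (s : ℝ) : HasDerivAt (fun s ↦ x ^ s / log x) (x ^ s) s := by
    simpa [hlog] using ((hasStrictDerivAt_const_rpow hx₀ s).hasDerivAt.div_const (log x))
  rw [integral_eq_sub_of_hasDerivAt (fun s _ ↦ hderiv s)
    ((continuous_const_rpow hx₀.ne').intervalIntegrable a b), sub_div]

lemma abs_rpow_sub_rpow_div_log_le {x a b : ℝ} (hx₀ : 0 < x) (hx₁ : x ≤ 1) (ha : 0 ≤ a)
    (hb : 0 ≤ b) : |(x ^ b - x ^ a) / log x| ≤ |b - a| := by
  rcases hx₁.eq_or_lt with rfl | hx₁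
  · simp
  rw [rpow_sub_rpow_div_log_eq_integral hx₀ hx₁.ne, ← norm_eq_abs, ← one_mul |b - a|]
  refine intervalIntegral.norm_integral_le_of_norm_le_const fun s hs ↦ ?_
  have hs₀ : 0 ≤ s := (le_min ha hb).trans hs.1.le
  rw [norm_of_nonneg (rpow_nonneg hx₀.le s)]
  exact rpow_le_one hx₀.le hx₁.le hs₀

lemma intervalIntegrable_rpow_sub_rpow_div_log {a b : ℝ} (ha : 0 ≤ a) (hb : 0 ≤ b) :
    IntervalIntegrable (fun x ↦ (x ^ b - x ^ a) / log x) volume 0 1 := by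
  have hmeas : Measurable fun x : ℝ ↦ (x ^ b - x ^ a) / log x :=
    ((measurable_id.pow_const b).sub (measurable_id.pow_const a)).div measurable_log
  refine (intervalIntegrable_const (c := |b - a|)).mono_fun' hmeas.aestronglyMeasurable ?_
  rw [uIoc_of_le zero_le_one, EventuallyLE, ae_restrict_iff' measurableSet_Ioc]
  exact Eventually.of_forall fun x hx ↦ abs_rpow_sub_rpow_div_log_le hx.1 hx.2 ha hb

lemma integrable_rpow_prod_restrict {a b : ℝ} (ha : 0 ≤ a) :
    Integrable (fun p : ℝ × ℝ ↦ p.1 ^ p.2)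
      ((volume.restrict (Ioo 0 1)).prod (volume.restrict (Ioc a b))) := by
  have : IsFiniteMeasure (volume.restrict (Ioc a b)) := by
    rw [isFiniteMeasure_restrict]; exact measure_Ioc_lt_top.ne
  have : IsFiniteMeasure (volume.restrict (Ioo (0 : ℝ) 1)) := by
    rw [isFiniteMeasure_restrict]; exact measure_Ioo_lt_top.ne
  refine Integrable.mono' (integrable_const 1) (by fun_prop) ?_
  rw [Measure.prod_restrict, ae_restrict_iff' (measurableSet_Ioo.prod measurableSet_Ioc)]
  refine Eventually.of_forall fun p ⟨hx, hs⟩ ↦ ?_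
  rw [norm_of_nonneg (rpow_nonneg hx.1.le _)]
  exact rpow_le_one hx.1.le hx.2.le (ha.trans hs.1.le)

lemma integral_Ioo_zero_one_rpow {s : ℝ} (hs : -1 < s) : ∫ x in Ioo 0 1, x ^ s = (s + 1)⁻¹ := by
  rw [← integral_Ioc_eq_integral_Ioo, ← integral_of_le zero_le_one, integral_rpow (.inl hs),
    one_rpow, zero_rpow (by linarith), sub_zero, one_div]

theorem integral_rpow_sub_rpow_div_log {a b : ℝ} (ha : 0 ≤ a) (hb : 0 ≤ b) :
    ∫ x in 0..1, (x ^ b - x ^ a) / log x = log (b + 1) - log (a + 1) := by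
  wlog hab : a ≤ b generalizing a b
  · rw [← neg_sub, ← this hb ha (le_of_not_ge hab), ← intervalIntegral.integral_neg]
    congr 1 with x
    ring
  rw [integral_of_le zero_le_one, integral_Ioc_eq_integral_Ioo]
  calc ∫ x in Ioo 0 1, (x ^ b - x ^ a) / log x
      = ∫ x in Ioo 0 1, ∫ s in Ioc a b, x ^ s :=
        setIntegral_congr_fun measurableSet_Ioo fun x hx ↦ by
          rw [rpow_sub_rpow_div_log_eq_integral hx.1 hx.2.ne, integral_of_le hab]
    _ = ∫ s in Ioc a b, ∫ x in Ioo 0 1, x ^ s :=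
        integral_integral_swap (integrable_rpow_prod_restrict ha)
    _ = ∫ s in a..b, (s + 1)⁻¹ := by
        rw [integral_of_le hab]
        exact setIntegral_congr_fun measurableSet_Ioc fun s hs ↦
          integral_Ioo_zero_one_rpow (by linarith [hs.1])
    _ = log (b + 1) - log (a + 1) := by
        rw [integral_comp_add_right (fun s ↦ s⁻¹), integral_inv_of_pos (by linarith) (by linarith),
          log_div (by linarith) (by linarith)]

lemma one_sub_rpow_le_mul_one_sub {x s : ℝ} (hx₀ : 0 ≤ x) (hx₁ : x ≤ 1) (hs : 0 ≤ s) :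
    1 - x ^ s ≤ (1 + s) * (1 - x) := by
  rcases le_total s 1 with hs₁ | hs₁
  · have := self_le_rpow_of_le_one hx₀ hx₁ hs₁
    nlinarith
  · have := one_add_mul_self_le_rpow_one_add (s := x - 1) (by linarith) hs₁
    rw [add_sub_cancel] at this
    nlinarith

lemma integral_rpow_mem_Icc {x w : ℝ} (hx₀ : 0 < x) (hx₁ : x ≤ 1) (hw : 0 ≤ w) :
    ∫ s in 0..w, x ^ s ∈ Icc (w * (1 - (1 + w) * (1 - x))) w := by
  have hint : IntervalIntegrable (fun s ↦ x ^ s) volume 0 w :=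
    (continuous_const_rpow hx₀.ne').intervalIntegrable 0 w
  constructor
  · calc w * (1 - (1 + w) * (1 - x)) = ∫ _ in 0..w, 1 - (1 + w) * (1 - x) := by
          rw [intervalIntegral.integral_const, smul_eq_mul, sub_zero]
      _ ≤ ∫ s in 0..w, x ^ s := integral_mono_on hw intervalIntegrable_const hint fun s hs ↦ by
          have := one_sub_rpow_le_mul_one_sub hx₀.le hx₁ hs.1
          nlinarith [hs.2]
  · calc ∫ s in 0..w, x ^ s ≤ ∫ _ in 0..w, (1 : ℝ) :=
          integral_mono_on hw hint intervalIntegrable_const fun s hs ↦ rpow_le_one hx₀.le hx₁ hs.1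
      _ = w := by simp

lemma abs_one_sub_mul_sub_rpow_div_log_le {x z : ℝ} (hx₀ : 0 < x) (hx₁ : x < 1) (hz : 0 ≤ z) :
    |(1 - (1 - x) * z - x ^ z) / log x| ≤ z * (z + 2) * (1 - x) := by
  have hsplit : (1 - (1 - x) * z - x ^ z) / log x =
      z * ((x ^ (1 : ℝ) - x ^ (0 : ℝ)) / log x) - (x ^ z - x ^ (0 : ℝ)) / log x := by
    rw [rpow_zero, rpow_one]; ring
  rw [hsplit, rpow_sub_rpow_div_log_eq_integral hx₀ hx₁.ne,
    rpow_sub_rpow_div_log_eq_integral hx₀ hx₁.ne]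
  obtain ⟨hl₁, hu₁⟩ := integral_rpow_mem_Icc hx₀ hx₁.le zero_le_one
  obtain ⟨hl, hu⟩ := integral_rpow_mem_Icc hx₀ hx₁.le hz
  rw [abs_le]
  constructor <;> nlinarith [mul_le_mul_of_nonneg_left hl₁ hz, mul_le_mul_of_nonneg_left hu₁ hz]

lemma integral_pow_mul_one_sub_mul_sub_rpow_div_log (n : ℕ) {z : ℝ} (hz : 0 ≤ z) :
    ∫ x in 0..1, x ^ n * ((1 - (1 - x) * z - x ^ z) / log x) =
      z * (log (n + 2) - log (n + 1)) - (log (n + z + 1) - log (n + 1)) := by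
  have hn : (0 : ℝ) ≤ n := n.cast_nonneg
  have hsplit : ∀ᵐ x, x ∈ Ι (0 : ℝ) 1 → x ^ n * ((1 - (1 - x) * z - x ^ z) / log x) =
      z * ((x ^ ((n : ℝ) + 1) - x ^ (n : ℝ)) / log x) -
        (x ^ ((n : ℝ) + z) - x ^ (n : ℝ)) / log x :=
    Eventually.of_forall fun x hx ↦ by
      have hx₀ : 0 < x := by simpa using hx.1
      rw [rpow_add hx₀, rpow_add hx₀, rpow_one, rpow_natCast]
      ring
  rw [integral_congr_ae hsplit, intervalIntegral.integral_sub, intervalIntegral.integral_const_mul,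
    integral_rpow_sub_rpow_div_log hn (by linarith),
    integral_rpow_sub_rpow_div_log hn (by linarith)]
  · ring_nf
  · exact (intervalIntegrable_rpow_sub_rpow_div_log hn (by linarith)).const_mul z
  · exact intervalIntegrable_rpow_sub_rpow_div_log hn (by linarith)

theorem hasSum_integral_pow_mul_one_sub_mul_sub_rpow_div_log {z : ℝ} (hz : 0 ≤ z) :
    HasSum (fun n : ℕ ↦ ∫ x in 0..1, x ^ n * ((1 - (1 - x) * z - x ^ z) / log x))
      (∫ x in 0..1, (1 - (1 - x) * z - x ^ z) / ((1 - x) * log x)) := by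
  have hIoo : ∀ᵐ x, x ∈ Ι (0 : ℝ) 1 → x ∈ Ioo (0 : ℝ) 1 :=
    (Measure.ae_ne volume 1).mono fun x hx₁ hx ↦ by
      rw [uIoc_of_le zero_le_one] at hx
      exact ⟨hx.1, hx.2.lt_of_ne hx₁⟩
  refine intervalIntegral.hasSum_integral_of_dominated_convergence
    (fun n x ↦ x ^ n * (z * (z + 2) * (1 - x)))
    (fun n ↦ Measurable.aestronglyMeasurable (by fun_prop))
    (fun n ↦ hIoo.mono fun x h hx ↦ ?_) (hIoo.mono fun x h hx ↦ ?_) ?_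
    (hIoo.mono fun x h hx ↦ ?_)
  · obtain ⟨hx₀, hx₁⟩ := h hx
    rw [norm_mul, norm_pow, norm_of_nonneg hx₀.le]
    exact mul_le_mul_of_nonneg_left (abs_one_sub_mul_sub_rpow_div_log_le hx₀ hx₁ hz)
      (by positivity)
  · exact (summable_geometric_of_lt_one (h hx).1.le (h hx).2).mul_right _
  · refine (intervalIntegrable_const (c := z * (z + 2))).congr_uIoo fun x hx ↦ ?_
    rw [uIoo_of_le zero_le_one] at hx
    rw [tsum_mul_right, tsum_geometric_of_lt_one hx.1.le hx.2]
    field_simp [(sub_pos.2 hx.2).ne']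
  · obtain ⟨hx₀, hx₁⟩ := h hx
    have hgeom := (hasSum_geometric_of_lt_one hx₀.le hx₁).mul_right
      ((1 - (1 - x) * z - x ^ z) / log x)
    rwa [inv_mul_eq_div, div_div, mul_comm (log x)] at hgeom

lemma sum_range_log_add_one (N : ℕ) : ∑ n ∈ Finset.range N, log (n + 1) = log N ! := by
  rw [← Finset.prod_range_add_one_eq_factorial, Nat.cast_prod, log_prod fun n _ ↦ by positivity]
  push_cast; rfl

theorem tendsto_sum_range_log_gamma_one_add {z : ℝ} (hz : -1 < z) :
    Tendsto (fun N : ℕ ↦ ∑ n ∈ Finset.range N,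
      (z * (log (n + 2) - log (n + 1)) - (log (n + z + 1) - log (n + 1))))
      atTop (𝓝 (log (Gamma (1 + z)))) := by
  have hpartial (N : ℕ) : ∑ n ∈ Finset.range N,
      (z * (log (n + 2) - log (n + 1)) - (log (n + z + 1) - log (n + 1))) =
      BohrMollerup.logGammaSeq (1 + z) N + z * (log (N + 1) - log N) +
        (log (N + (z + 1)) - log N) := by
    have htel : ∑ n ∈ Finset.range N, (log ((n : ℝ) + 2) - log (n + 1)) = log (N + 1) := by
      simpa [add_assoc, one_add_one_eq_two] using
        Finset.sum_range_sub (fun n : ℕ ↦ log ((n : ℝ) + 1)) N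
    have hshift (x : ℝ) : log (1 + z + x) = log (x + z + 1) := by congr 1; ring
    simp only [BohrMollerup.logGammaSeq, Finset.sum_range_succ, Finset.sum_sub_distrib,
      ← Finset.mul_sum, htel, sum_range_log_add_one, hshift, ← add_assoc]
    ring
  have hlim := ((BohrMollerup.tendsto_log_gamma (by linarith : 0 < 1 + z)).add
    (tendsto_log_nat_add_one_sub_log.const_mul z)).add
    ((tendsto_log_comp_add_sub_log (z + 1)).comp tendsto_natCast_atTop_atTop)
  simpa [hpartial] using hlim

end Real

theorem log_gamma_integral_repr (z : ℝ) (hz : 0 ≤ z) :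
    Real.log (Real.Gamma (1 + z)) =
      ∫ t in (0:ℝ)..1, (1 - t * z - (1 - t) ^ z) / (t * Real.log (1 - t)) := by
  have hsubst : ∫ t in (0 : ℝ)..1, (1 - t * z - (1 - t) ^ z) / (t * log (1 - t)) =
      ∫ x in (0 : ℝ)..1, (1 - (1 - x) * z - x ^ z) / ((1 - x) * log x) := by
    simpa using integral_comp_sub_left (a := 0) (b := 1)
      (fun x ↦ (1 - (1 - x) * z - x ^ z) / ((1 - x) * log x)) (1 : ℝ)
  have hseries := (hasSum_integral_pow_mul_one_sub_mul_sub_rpow_div_log hz).tendsto_sum_nat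
  simp only [integral_pow_mul_one_sub_mul_sub_rpow_div_log _ hz] at hseries
  rw [hsubst]
  exact tendsto_nhds_unique (tendsto_sum_range_log_gamma_one_add (by linarith)) hseries
end

section
/- For all p ∈ (0,1) and all u > 0, (1-p)/(e^{up} - 1) - 1/(e^{up/(1-p)} - 1) ≥ 0. -/
/-! Convexity of `exp` with `exp 0 = 1` gives `exp (t * s) - 1 ≤ t * (exp s - 1)` for `t ∈ [0, 1]`;
with `t = 1 - p` and `s = u * p / (1 - p)` this is the claim after clearing the (positive) denominators. -/

namespace Real

theorem exp_mul_sub_one_le {t : ℝ} (ht₀ : 0 ≤ t) (ht₁ : t ≤ 1) (x : ℝ) :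
    exp (t * x) - 1 ≤ t * (exp x - 1) := by
  have h := convexOn_exp.2 (Set.mem_univ x) (Set.mem_univ 0) ht₀ (sub_nonneg.2 ht₁)
    (add_sub_cancel t 1)
  simp only [smul_eq_mul, mul_zero, add_zero, exp_zero, mul_one] at h
  linarith

theorem exp_sub_one_pos {x : ℝ} (hx : 0 < x) : 0 < exp x - 1 :=
  sub_pos.2 (one_lt_exp_iff.2 hx)

end Real

theorem exp_inequality_split1 (p u : ℝ) (hp : p ∈ Set.Ioo (0:ℝ) 1) (hu : 0 < u) :
    0 ≤ (1 - p) / (Real.exp (u * p) - 1) - 1 / (Real.exp (u * p / (1 - p)) - 1) := by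
  obtain ⟨hp₀, hp₁⟩ := hp
  have hq : 0 < 1 - p := sub_pos.2 hp₁
  set s := u * p / (1 - p) with hs
  have hup : u * p = (1 - p) * s := by rw [hs, mul_div_cancel₀ _ hq.ne']
  have hs₀ : 0 < s := div_pos (mul_pos hu hp₀) hq
  rw [hup, sub_nonneg, div_le_div_iff₀ (Real.exp_sub_one_pos hs₀)
    (Real.exp_sub_one_pos (mul_pos hq hs₀)), one_mul]
  exact Real.exp_mul_sub_one_le hq.le (by linarith) s
end

section
/- For all p ∈ (0,1), all integers x ≥ 1, and all u > 0, the quantity P_x(u) = 1/(1 - e^{-up}) - 1/(1 - e^{-up/(1-p)}) - e^{-ux}/(1 - e^{-u}) is nonnegative. -/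
/-!
Put `a = u p`, `b = u p / (1 - p)` and `c = u`, so that `1 / a = 1 / b + 1 / c`.
Since `1 / (1 - e^{-y}) = 1 + 1 / (e^y - 1)` and `e^{-u x} ≤ e^{-u}`, it suffices to show
`1 / (e^b - 1) + 1 / (e^c - 1) ≤ 1 / (e^a - 1)`. This follows because `y / (e^y - 1)` is
decreasing on `(0, ∞)` (the secant slopes `(e^y - 1) / y` of the convex function `exp` increase):
`1 / (e^b - 1) ≤ (1 / b) · a / (e^a - 1)`, likewise for `c`, and the two bounds add up to
`1 / (e^a - 1)`.
-/

open Real Set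

lemma antitoneOn_div_exp_sub_one : AntitoneOn (fun y : ℝ => y / (exp y - 1)) (Ioi 0) := by
  intro a (ha : 0 < a) b (hb : 0 < b) hab
  have hslope : (exp a - exp 0) / (a - 0) ≤ (exp b - exp 0) / (b - 0) :=
    convexOn_exp.secant_mono (mem_univ 0) (mem_univ a) (mem_univ b) ha.ne' hb.ne' hab
  simp only [exp_zero, sub_zero] at hslope
  have hslope_pos : 0 < (exp a - 1) / a := div_pos (sub_pos.2 (one_lt_exp_iff.2 ha)) ha
  simpa only [inv_div] using inv_anti₀ hslope_pos hslope

lemma one_div_exp_sub_one_add_le {a b c : ℝ} (ha : 0 < a) (hb : 0 < b) (hc : 0 < c)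
    (habc : a⁻¹ = b⁻¹ + c⁻¹) :
    1 / (exp b - 1) + 1 / (exp c - 1) ≤ 1 / (exp a - 1) := by
  have hab : a ≤ b := (inv_le_inv₀ hb ha).1 (by linarith [inv_pos.2 hc])
  have hac : a ≤ c := (inv_le_inv₀ hc ha).1 (by linarith [inv_pos.2 hb])
  have bound : ∀ y, 0 < y → a ≤ y → 1 / (exp y - 1) ≤ y⁻¹ * (a / (exp a - 1)) := by
    intro y hy hay
    calc 1 / (exp y - 1) = y⁻¹ * (y / (exp y - 1)) := by field_simp
      _ ≤ y⁻¹ * (a / (exp a - 1)) :=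
        mul_le_mul_of_nonneg_left (antitoneOn_div_exp_sub_one ha hy hay) (inv_nonneg.2 hy.le)
  calc 1 / (exp b - 1) + 1 / (exp c - 1)
      ≤ b⁻¹ * (a / (exp a - 1)) + c⁻¹ * (a / (exp a - 1)) :=
        add_le_add (bound b hb hab) (bound c hc hac)
    _ = 1 / (exp a - 1) := by rw [← add_mul, ← habc]; field_simp

lemma one_div_one_sub_exp_neg {y : ℝ} (hy : y ≠ 0) :
    1 / (1 - exp (-y)) = 1 + 1 / (exp y - 1) := by
  have hexp : exp y - 1 ≠ 0 := sub_ne_zero.2 (mt (exp_eq_one_iff y).1 hy)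
  rw [exp_neg]
  field_simp
  ring

lemma exp_neg_mul_div_one_sub_exp_neg_le {u x : ℝ} (hu : 0 < u) (hx : 1 ≤ x) :
    exp (-(u * x)) / (1 - exp (-u)) ≤ 1 / (exp u - 1) := by
  have hden : 0 < 1 - exp (-u) := sub_pos.2 (exp_lt_one_iff.2 (neg_lt_zero.2 hu))
  calc exp (-(u * x)) / (1 - exp (-u)) ≤ exp (-u) / (1 - exp (-u)) := by
        gcongr
        nlinarith
    _ = 1 / (exp u - 1) := by
        have hexp : exp u - 1 ≠ 0 := (sub_pos.2 (one_lt_exp_iff.2 hu)).ne'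
        rw [exp_neg]
        field_simp

theorem Px_nonneg (p : ℝ) (hp : p ∈ Set.Ioo (0:ℝ) 1) (x : ℕ) (hx : 1 ≤ x) (u : ℝ) (hu : 0 < u) :
    0 ≤ 1 / (1 - Real.exp (-(u * p))) - 1 / (1 - Real.exp (-(u * p / (1 - p))))
        - Real.exp (-(u * x)) / (1 - Real.exp (-u)) := by
  obtain ⟨hp0, hp1⟩ := hp
  have ha : 0 < u * p := mul_pos hu hp0
  have hb : 0 < u * p / (1 - p) := div_pos ha (sub_pos.2 hp1)
  have habc : (u * p)⁻¹ = (u * p / (1 - p))⁻¹ + u⁻¹ := by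
    field_simp
    ring
  have hlast := exp_neg_mul_div_one_sub_exp_neg_le hu (Nat.one_le_cast.2 hx)
  rw [one_div_one_sub_exp_neg ha.ne', one_div_one_sub_exp_neg hb.ne']
  linarith [one_div_exp_sub_one_add_le ha hb hu habc]
end

section
/- For p ∈ (0,1) and integer x ≥ 1, define f_x(y) = log( C(y/p - 1, y) / C(y + x - 1, y) ) for real y > 0, where C(a, y) = Γ(a+1)/(Γ(y+1)Γ(a-y+1)) is the generalized binomial coefficient. Then f_x is convex on (0, ∞). -/
/-!
Up to the constant `log Γ(x)` the function is `log Γ(y/p) - log Γ(y/p - y) - log Γ(y + x)`. By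
Gauss' limit formula for `log Γ` it is the pointwise limit, as `n → ∞`, of affine functions of `y`
plus `∑_{c ∈ C} log (y + c) - ∑_{m ≤ 2n+1} log (y + p m)`, where `C` consists of the `2n + 2`
numbers `p j / (1 - p)` and `x + j` for `j ≤ n`. At most `k` elements of `C` lie below `p k`, so
the `k`-th smallest `c ∈ C` satisfies `p k ≤ c`, and each such pair contributes the convex function
`log (y + c) - log (y + p k)`.
-/

/-- Generalized binomial coefficient `C(a, y) = Γ(a+1)/(Γ(y+1)Γ(a-y+1))`. -/
noncomputable def genBinom (a y : ℝ) : ℝ :=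
  Real.Gamma (a + 1) / (Real.Gamma (y + 1) * Real.Gamma (a - y + 1))

open Real Set Filter Topology Finset
open scoped Nat
open Real.BohrMollerup (logGammaSeq)

lemma convexOn_log_add_sub_log_add {c d : ℝ} (hdc : d ≤ c) :
    ConvexOn ℝ (Ioi (-d)) (fun y => log (y + c) - log (y + d)) := by
  have pos : ∀ y ∈ Ioi (-d), 0 < y + d ∧ 0 < y + c := fun y (hy : -d < y) =>
    ⟨by linarith, by linarith⟩
  have hf' : ∀ y ∈ Ioi (-d), HasDerivAt (fun y => log (y + c) - log (y + d))
      ((y + c)⁻¹ - (y + d)⁻¹) y := fun y hy => by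
    obtain ⟨hd, hc⟩ := pos y hy
    exact ((((hasDerivAt_id' y).add_const c).log hc.ne').fun_sub
      (((hasDerivAt_id' y).add_const d).log hd.ne')).congr_deriv (by simp only [one_div])
  have hf'' : ∀ y ∈ Ioi (-d), HasDerivAt (fun y => (y + c)⁻¹ - (y + d)⁻¹)
      (((y + d) ^ 2)⁻¹ - ((y + c) ^ 2)⁻¹) y := fun y hy => by
    obtain ⟨hd, hc⟩ := pos y hy
    exact ((((hasDerivAt_id' y).add_const c).fun_inv hc.ne').fun_sub
      (((hasDerivAt_id' y).add_const d).fun_inv hd.ne')).congr_deriv (by ring)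
  rw [← interior_Ioi] at hf' hf''
  refine convexOn_of_hasDerivWithinAt2_nonneg (convex_Ioi _)
    (fun y hy => (hf' y (by rwa [interior_Ioi])).continuousAt.continuousWithinAt)
    (fun y hy => (hf' y hy).hasDerivWithinAt) (fun y hy => (hf'' y hy).hasDerivWithinAt) ?_
  intro y hy
  obtain ⟨hd, hc⟩ := pos y (by rwa [interior_Ioi] at hy)
  have : ((y + c) ^ 2)⁻¹ ≤ ((y + d) ^ 2)⁻¹ := inv_anti₀ (by positivity) (by gcongr)
  linarith

lemma convexOn_sum_log_add_sub_sum_log_add_mul {p : ℝ} (hp : 0 ≤ p) (C : Multiset ℝ)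
    (hC : ∀ k : ℕ, Multiset.card (C.filter (· < p * k)) ≤ k) :
    ConvexOn ℝ (Ioi 0) (fun y => (C.map fun c => log (y + c)).sum
      - ∑ m ∈ Finset.range (Multiset.card C), log (y + p * m)) := by
  obtain ⟨N, hN⟩ : ∃ N, Multiset.card C = N := ⟨_, rfl⟩
  induction N generalizing C with
  | zero => simpa [Multiset.card_eq_zero.mp hN] using convexOn_const 0 (convex_Ioi 0)
  | succ N ih =>
    obtain ⟨c, hcC, hmax⟩ := Multiset.exists_max_image id (s := C) (by rintro rfl; simp at hN)
    have hpN : p * N ≤ c := by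
      by_contra! hlt
      have hall : C.filter (· < p * N) = C :=
        Multiset.filter_eq_self.mpr fun b hb => (hmax b hb).trans_lt hlt
      have := hC N
      rw [hall, hN] at this
      omega
    obtain ⟨C', rfl⟩ := Multiset.exists_cons_of_mem hcC
    have hC' : ∀ k : ℕ, Multiset.card (C'.filter (· < p * k)) ≤ k := fun k =>
      (Multiset.card_le_card (Multiset.filter_le_filter _ (Multiset.le_cons_self _ _))).trans (hC k)
    have hN' : Multiset.card C' = N := by simpa using hN
    have hpair := (convexOn_log_add_sub_log_add hpN).subset
      (Ioi_subset_Ioi (neg_nonpos.mpr (by positivity))) (convex_Ioi 0)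
    refine ((ih C' hC' hN').add hpair).congr fun y _ => ?_
    simp only [Pi.add_apply, Multiset.map_cons, Multiset.sum_cons, Multiset.card_cons, hN',
      Finset.sum_range_succ]
    ring

lemma card_filter_add_card_filter_le {p x : ℝ} (hp0 : 0 < p) (hp1 : p < 1) (hx : 1 ≤ x)
    (n k : ℕ) :
    #{j ∈ Finset.range n | p / (1 - p) * ((j : ℕ) : ℝ) < p * k}
      + #{j ∈ Finset.range n | x + ((j : ℕ) : ℝ) < p * k} ≤ k := by
  have hq : 0 < 1 - p := by linarith
  have hk : (0 : ℝ) ≤ k := k.cast_nonneg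
  calc _ ≤ #{i ∈ Finset.range k | ((i : ℕ) : ℝ) < (1 - p) * k}
        + #{i ∈ Finset.range k | ¬ ((i : ℕ) : ℝ) < (1 - p) * k} := by
        gcongr ?_ + ?_
        · refine card_le_card fun j hj => ?_
          simp only [mem_filter, Finset.mem_range] at hj ⊢
          have : (j : ℝ) < (1 - p) * k := by
            rw [div_mul_eq_mul_div, div_lt_iff₀ hq] at hj
            nlinarith
          exact ⟨by exact_mod_cast this.trans_le (by nlinarith : (1 - p) * (k : ℝ) ≤ k), this⟩
        -- the reflection `j ↦ k - 1 - j` sends the second family above `(1 - p) k`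
        · have hlt : ∀ j : ℕ, x + (j : ℝ) < p * k → j + 1 < k ∧ (1 - p) * k < k - 1 - j :=
            fun j hj => ⟨by exact_mod_cast (by nlinarith : (j : ℝ) + 1 < k), by linarith⟩
          refine card_le_card_of_injOn (fun j => k - 1 - j) (fun j hj => ?_)
            (fun i hi j hj hij => ?_) <;> simp only [coe_filter, Set.mem_ofPred_eq] at *
          · obtain ⟨hjk, hfar⟩ := hlt j hj.2
            refine ⟨by simp only [Finset.mem_range]; omega, ?_⟩
            rw [Nat.cast_sub (by omega), Nat.cast_sub (by omega)]
            push_cast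
            linarith
          · have := (hlt i hi.2).1
            have := (hlt j hj.2).1
            omega
    _ = k := by rw [card_filter_add_card_filter_not, Finset.card_range]

lemma ConvexOn.add_affine {s : Set ℝ} {f : ℝ → ℝ} (hf : ConvexOn ℝ s f) (a b : ℝ) :
    ConvexOn ℝ s (fun y => f y + (a + b * y)) :=
  hf.add <| ((LinearMap.mulLeft ℝ b).convexOn hf.1).add_const a |>.congr fun y _ => by
    simp [add_comm]

lemma logGammaSeq_div {a : ℝ} (ha : 0 < a) {y : ℝ} (hy : 0 < y) (n : ℕ) :
    logGammaSeq (y / a) n = y / a * log n + log n ! + (n + 1) * log a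
      - ∑ m ∈ Finset.range (n + 1), log (y + a * m) := by
  have h : ∀ m : ℕ, log (y / a + m) = log (y + a * m) - log a := fun m => by
    rw [← log_div (by positivity) ha.ne']
    congr 1
    field_simp
  simp only [logGammaSeq, h, sum_sub_distrib, sum_const, Finset.card_range, nsmul_eq_mul]
  push_cast
  ring

lemma convexOn_logGammaSeq_sub {p x : ℝ} (hp0 : 0 < p) (hp1 : p < 1) (hx : 1 ≤ x) (n : ℕ) :
    ConvexOn ℝ (Ioi 0) (fun y => logGammaSeq (y / p) (2 * n + 1)
      - logGammaSeq (y / p - y) n - logGammaSeq (y + x) n) := by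
  set r := p / (1 - p)
  have hr : 0 < r := div_pos hp0 (by linarith)
  set C : Multiset ℝ := (Finset.range (n + 1)).val.map (fun j : ℕ => r * j)
    + (Finset.range (n + 1)).val.map (fun j : ℕ => x + j)
  have hC : ∀ k : ℕ, Multiset.card (C.filter (· < p * k)) ≤ k := fun k => by
    simp only [C, Multiset.filter_add, Multiset.card_add, Multiset.filter_map, Multiset.card_map,
      ← Finset.filter_val, Finset.card_val]
    exact card_filter_add_card_filter_le hp0 hp1 hx (n + 1) k
  have hcard : Multiset.card C = 2 * n + 1 + 1 := by
    simp only [C, Multiset.card_add, Multiset.card_map, Finset.card_val, Finset.card_range]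
    ring
  have hsum : ∀ y, (C.map fun c => log (y + c)).sum = ∑ j ∈ Finset.range (n + 1), log (y + r * j)
      + ∑ j ∈ Finset.range (n + 1), log (y + (x + j)) := by
    intro y
    simp only [C, Multiset.map_add, Multiset.sum_add, Multiset.map_map, Finset.sum_eq_multiset_sum]
    rfl
  refine ((convexOn_sum_log_add_sub_sum_log_add_mul hp0.le C hC).add_affine
    (log (2 * n + 1)! + (2 * n + 2) * log p - 2 * log n ! - (n + 1) * log r - x * log n)
    (log ↑(2 * n + 1) / p - log n / r - log n)).congr fun y (hy : 0 < y) => ?_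
  have hyr : y / p - y = y / r := by
    simp only [r]
    field_simp
  rw [hyr, logGammaSeq_div hp0 hy, logGammaSeq_div hr hy]
  simp only [hsum, hcard, logGammaSeq, add_assoc]
  push_cast
  ring

lemma ConvexOn.of_tendsto {E ι : Type*} [AddCommGroup E] [Module ℝ E] {l : Filter ι} [l.NeBot]
    {s : Set E} {F : ι → E → ℝ} {f : E → ℝ} (hF : ∀ᶠ i in l, ConvexOn ℝ s (F i))
    (hlim : ∀ y ∈ s, Tendsto (F · y) l (𝓝 (f y))) : ConvexOn ℝ s f := by
  obtain ⟨i, hi⟩ := hF.exists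
  refine ⟨hi.1, fun a ha b hb μ ν hμ hν hμν => ?_⟩
  refine le_of_tendsto_of_tendsto (hlim _ (hi.1 ha hb hμ hν hμν))
    (((hlim a ha).const_smul μ).add ((hlim b hb).const_smul ν)) ?_
  filter_upwards [hF] with j hj using hj.2 ha hb hμ hν hμν

lemma div_sub_self_pos {p y : ℝ} (hp0 : 0 < p) (hp1 : p < 1) (hy : 0 < y) : 0 < y / p - y :=
  sub_pos.mpr ((lt_div_iff₀ hp0).mpr (mul_lt_of_lt_one_right hy hp1))

lemma convexOn_log_Gamma_sub {p x : ℝ} (hp0 : 0 < p) (hp1 : p < 1) (hx : 1 ≤ x) :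
    ConvexOn ℝ (Ioi 0) (fun y => log (Gamma (y / p)) - log (Gamma (y / p - y))
      - log (Gamma (y + x))) := by
  refine ConvexOn.of_tendsto (l := atTop)
    (Eventually.of_forall (convexOn_logGammaSeq_sub hp0 hp1 hx)) fun y (hy : 0 < y) => ?_
  have hodd : Tendsto (fun n : ℕ => 2 * n + 1) atTop atTop :=
    tendsto_atTop_mono (fun n => (by omega : n ≤ 2 * n + 1)) tendsto_id
  exact (((BohrMollerup.tendsto_log_gamma (by positivity)).comp hodd).sub
    (BohrMollerup.tendsto_log_gamma (div_sub_self_pos hp0 hp1 hy))).sub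
    (BohrMollerup.tendsto_log_gamma (by positivity))

lemma genBinom_sub_one_div_genBinom_sub_one {a b y : ℝ} (hy : Gamma (y + 1) ≠ 0) :
    genBinom (a - 1) y / genBinom (b - 1) y
      = Gamma a * Gamma (b - y) / (Gamma (a - y) * Gamma b) := by
  rw [genBinom, genBinom, sub_add_cancel, sub_add_cancel, sub_right_comm a, sub_add_cancel,
    sub_right_comm b, sub_add_cancel]
  field_simp

theorem fx_convex (p : ℝ) (hp : p ∈ Set.Ioo (0:ℝ) 1) (x : ℕ) (hx : 1 ≤ x) :
    ConvexOn ℝ (Set.Ioi (0:ℝ))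
      (fun y : ℝ => Real.log (genBinom (y / p - 1) y / genBinom (y + x - 1) y)) := by
  obtain ⟨hp0, hp1⟩ := hp
  refine ((convexOn_log_Gamma_sub hp0 hp1 (by exact_mod_cast hx : (1 : ℝ) ≤ x)).add_const
    (log (Gamma x))).congr fun y (hy : 0 < y) => ?_
  have hyp := div_sub_self_pos hp0 hp1 hy
  have hΓ {s : ℝ} (hs : 0 < s) : Gamma s ≠ 0 := (Gamma_pos_of_pos hs).ne'
  have hx0 : (0 : ℝ) < x := by exact_mod_cast hx
  rw [genBinom_sub_one_div_genBinom_sub_one (hΓ (by linarith)), add_sub_cancel_left,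
    log_div (mul_ne_zero (hΓ (by positivity)) (hΓ hx0)) (mul_ne_zero (hΓ hyp) (hΓ (by positivity))),
    log_mul (hΓ (by positivity)) (hΓ hx0), log_mul (hΓ hyp) (hΓ (by positivity))]
  simp only [Pi.add_apply]
  ring
end
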